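/- arXiv:2504.20217 — 5 statements merged into one kernel-verified Lean document; each statement's English description precedes it below -/
import Mathlib

section
/- In a left restriction semigroupoid S, for every s, t ∈ S, the pair (s,t) is composable if and only if (s, t*) is composable. -/
/-- An (Exel) semigroupoid: a partially defined associative operation. -/
structure Sgpd (S : Type*) where
  composable : S → S → Prop
  mul : S → S → S
  assoc₁ : ∀ s t r, composable s t → composable t r →
    composable (mul s t) r ∧ composable s (mul t r) ∧ mul (mul s t) r = mul s (mul t r)
  assoc₂ : ∀ s t r, composable s t → composable (mul s t) r →
    composable t r ∧ composable s (mul t r) ∧ mul (mul s t) r = mul s (mul t r)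
  assoc₃ : ∀ s t r, composable t r → composable s (mul t r) →
    composable s t ∧ composable (mul s t) r ∧ mul (mul s t) r = mul s (mul t r)

/-- A left restriction semigroupoid. -/
structure LRSgpd (S : Type*) extends Sgpd S where
  star : S → S
  lr1 : ∀ s, composable (star s) s ∧ mul (star s) s = s
  lr2 : ∀ s t, (composable (star s) (star t) ↔ composable (star t) (star s)) ∧
    (composable (star s) (star t) → mul (star s) (star t) = mul (star t) (star s))
  lr3 : ∀ s t, composable (star s) t → star (mul (star s) t) = mul (star s) (star t)
  lr4 : ∀ s t, composable s t → mul s (star t) = mul (star (mul s t)) s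

theorem stmt0 {S : Type*} (L : LRSgpd S) (s t : S) :
    L.composable s t ↔ L.composable s (L.star t) := by
  -- Both directions are Exel associativity applied to the factorization `t = t* t` from (lr1).
  obtain ⟨hstar_t, hstar_mul⟩ := L.lr1 t
  constructor
  · intro h
    rw [← hstar_mul] at h
    exact (L.assoc₃ s (L.star t) t hstar_t h).1
  · intro h
    simpa only [hstar_mul] using (L.assoc₁ s (L.star t) t h hstar_t).2.1
end

section
/- Every left restriction semigroupoid is categorical: for all s, t, the sets S_s = {u : (u,s) composable} and S_t = {u : (u,t) composable} are either equal or disjoint. -/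
namespace LRSgpd

variable {S : Type*} (L : LRSgpd S)

theorem composable_star_iff {u s : S} : L.composable u (L.star s) ↔ L.composable u s := by
  obtain ⟨hcomp, hmul⟩ := L.lr1 s
  constructor
  · intro h
    simpa only [hmul] using (L.assoc₁ u (L.star s) s h hcomp).2.1
  · intro h
    exact (L.assoc₃ u (L.star s) s hcomp (hmul.symm ▸ h)).1

theorem composable_star_mul_left {u s : S} (h : L.composable u s) :
    L.composable (L.star (L.mul u s)) u :=
  (L.assoc₃ _ u s h (L.lr1 (L.mul u s)).1).1

theorem composable_star_star {u s t : S} (hs : L.composable u s) (ht : L.composable u t) :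
    L.composable (L.star s) (L.star t) := by
  have hut : L.composable u (L.star t) := L.composable_star_iff.2 ht
  have hw : L.composable (L.mul (L.star (L.mul u s)) u) (L.star t) :=
    (L.assoc₁ _ u _ (L.composable_star_mul_left hs) hut).1
  rw [← L.lr4 u s hs] at hw
  exact (L.assoc₂ u _ _ (L.composable_star_iff.2 hs) hw).1

theorem composable_of_composable_star_star {s t v : S}
    (hst : L.composable (L.star s) (L.star t)) (hv : L.composable v s) : L.composable v t := by
  have hts : L.composable (L.star t) (L.star s) := (L.lr2 s t).1.1 hst
  have hvst : L.composable v (L.mul (L.star s) (L.star t)) :=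
    (L.assoc₁ v _ _ (L.composable_star_iff.2 hv) hst).2.1
  rw [(L.lr2 s t).2 hst] at hvst
  exact L.composable_star_iff.1 (L.assoc₃ v _ _ hts hvst).1

end LRSgpd

theorem stmt6 {S : Type*} (L : LRSgpd S) (s t : S) :
    (∀ u, L.composable u s ↔ L.composable u t) ∨
    (∀ u, ¬ (L.composable u s ∧ L.composable u t)) := by
  refine or_iff_not_imp_right.2 fun hmeet => ?_
  obtain ⟨u, hus, hut⟩ := not_forall_not.1 hmeet
  have hst := L.composable_star_star hus hut
  have hts := (L.lr2 s t).1.1 hst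
  exact fun v =>
    ⟨L.composable_of_composable_star_star hst, L.composable_of_composable_star_star hts⟩
end

section
/- Let S be a left restriction semigroupoid with E = S*. The Szendrei expansion Sz(S) = {(A,a) : A a finite subset of S, a ∈ A, a* ∈ A, and every b ∈ A has b* = a*}, with product (A,a)(B,b) = ((ab)*A ∪ aB, ab) defined when (a,b) is composable, is a semigroupoid; moreover the product is well-defined, i.e., (ab)*A ∪ aB is a finite set each of whose elements c satisfies c* = (ab)*. -/
/-- The defining condition for elements `(A, a)` of the Szendrei expansion. -/
def szCond {S : Type*} (L : LRSgpd S) (A : Finset S) (a : S) : Prop :=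
  a ∈ A ∧ L.star a ∈ A ∧ ∀ b ∈ A, L.star b = L.star a

/-- The first component `(ab)*A ∪ aB` of the Szendrei product. -/
def szSet {S : Type*} [DecidableEq S] (L : LRSgpd S) (A : Finset S) (a : S)
    (B : Finset S) (b : S) : Finset S :=
  A.image (fun x => L.mul (L.star (L.mul a b)) x) ∪ B.image (fun x => L.mul a x)

/-! In a left restriction semigroupoid, `y* = b*` forces `(ay)* = (ab)*` whenever `ab` is
defined, because `(ay)* = (a y*)* = (a b*)* = ((ab)* a)* = (ab)* a* = (ab)*`; and for `x* = a*`
one has `((ab)* x)* = (ab)* x* = (ab)*`. This makes the Szendrei product well defined.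
Associativity of the first components reduces to three pointwise identities, one for each of
`A`, `B`, `C`: `(abc)* ((ab)* x) = (abc)* x`, `(abc)* (a y) = a ((bc)* y)` (an instance of
`s t* = (st)* s`), and `(ab) z = a (b z)`. -/

namespace Sgpd

variable {S : Type*} (G : Sgpd S)

theorem composable_left_of_composable_mul {s t r : S} (htr : G.composable t r)
    (h : G.composable s (G.mul t r)) : G.composable s t :=
  (G.assoc₃ s t r htr h).1

end Sgpd

namespace LRSgpd

variable {S : Type*} (L : LRSgpd S)

theorem composable_star_mul {a b : S} (hab : L.composable a b) :
    L.composable (L.star (L.mul a b)) a :=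
  L.composable_left_of_composable_mul hab (L.lr1 _).1

theorem composable_mul_star {a b : S} (hab : L.composable a b) :
    L.composable a (L.star b) :=
  L.composable_left_of_composable_mul (L.lr1 b).1 (by rwa [(L.lr1 b).2])

theorem composable_star_mul_star {a b : S} (hab : L.composable a b) :
    L.composable (L.star (L.mul a b)) (L.star a) :=
  L.composable_mul_star (L.composable_star_mul hab)

theorem composable_star_of_star_eq {x t : S} (hx : L.star x = L.star t) :
    L.composable (L.star t) x :=
  hx ▸ (L.lr1 x).1

theorem star_mul_of_star_eq {x t : S} (hx : L.star x = L.star t) :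
    L.mul (L.star t) x = x :=
  hx ▸ (L.lr1 x).2

theorem composable_of_star_eq {s t x : S} (hs : L.composable s (L.star t))
    (hx : L.star x = L.star t) : L.composable s x := by
  have h := (L.assoc₁ s (L.star t) x hs (L.composable_star_of_star_eq hx)).2.1
  rwa [L.star_mul_of_star_eq hx] at h

theorem star_mul_mul_star {a b : S} (hab : L.composable a b) :
    L.mul (L.star (L.mul a b)) (L.star a) = L.star (L.mul a b) := by
  obtain ⟨-, hab', hassoc⟩ := L.assoc₁ (L.star a) a b (L.lr1 a).1 hab
  have hleft : L.mul (L.star a) (L.star (L.mul a b)) = L.star (L.mul a b) := by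
    rw [← L.lr3 a _ hab', ← hassoc, (L.lr1 a).2]
  rw [(L.lr2 _ _).2 (L.composable_star_mul_star hab), hleft]

theorem star_mul_star_right {a b : S} (hab : L.composable a b) :
    L.star (L.mul a (L.star b)) = L.star (L.mul a b) := by
  rw [L.lr4 a b hab, L.lr3 _ _ (L.composable_star_mul hab), L.star_mul_mul_star hab]

theorem star_mul_eq_of_star_eq_right {a b y : S} (hab : L.composable a b)
    (hy : L.star y = L.star b) : L.star (L.mul a y) = L.star (L.mul a b) := by
  have hay := L.composable_of_star_eq (L.composable_mul_star hab) hy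
  rw [← L.star_mul_star_right hay, hy, L.star_mul_star_right hab]

theorem star_star_mul_of_star_eq {a b x : S} (hab : L.composable a b)
    (hx : L.star x = L.star a) :
    L.star (L.mul (L.star (L.mul a b)) x) = L.star (L.mul a b) := by
  rw [L.lr3 _ _ (L.composable_of_star_eq (L.composable_star_mul_star hab) hx), hx,
    L.star_mul_mul_star hab]

theorem star_mul_mul_star_mul {s t x : S} (hst : L.composable s t)
    (hx : L.composable (L.star s) x) :
    L.mul (L.star (L.mul s t)) (L.mul (L.star s) x) = L.mul (L.star (L.mul s t)) x := by
  rw [← (L.assoc₁ _ _ x (L.composable_star_mul_star hst) hx).2.2, L.star_mul_mul_star hst]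

theorem mul_star_mul {a t y : S} (hat : L.composable a t) (hy : L.composable (L.star t) y) :
    L.mul a (L.mul (L.star t) y) = L.mul (L.star (L.mul a t)) (L.mul a y) := by
  obtain ⟨hty, -, hassoc⟩ := L.assoc₁ a (L.star t) y (L.composable_mul_star hat) hy
  rw [L.lr4 a t hat] at hty hassoc
  rw [← hassoc, (L.assoc₂ _ a y (L.composable_star_mul hat) hty).2.2]

end LRSgpd

namespace Szendrei

open LRSgpd

variable {S : Type*} [DecidableEq S] (L : LRSgpd S)

theorem szCond_szSet {A B : Finset S} {a b : S} (hA : szCond L A a) (hB : szCond L B b)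
    (hab : L.composable a b) : szCond L (szSet L A a B b) (L.mul a b) := by
  refine ⟨Finset.mem_union_right _ (Finset.mem_image_of_mem _ hB.1),
    Finset.mem_union_left _ (Finset.mem_image.2 ⟨L.star a, hA.2.1, L.star_mul_mul_star hab⟩),
    fun c hc => ?_⟩
  rcases Finset.mem_union.1 hc with hc | hc
  · obtain ⟨x, hx, rfl⟩ := Finset.mem_image.1 hc
    exact L.star_star_mul_of_star_eq hab (hA.2.2 x hx)
  · obtain ⟨y, hy, rfl⟩ := Finset.mem_image.1 hc
    exact L.star_mul_eq_of_star_eq_right hab (hB.2.2 y hy)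

theorem szSet_assoc {A B C : Finset S} {a b c : S} (hA : szCond L A a) (hB : szCond L B b)
    (hC : szCond L C c) (hab : L.composable a b) (hbc : L.composable b c) :
    szSet L (szSet L A a B b) (L.mul a b) C c
      = szSet L A a (szSet L B b C c) (L.mul b c) := by
  obtain ⟨habc, habc', hassoc⟩ := L.assoc₁ a b c hab hbc
  have onA : ∀ x ∈ A, L.mul (L.star (L.mul (L.mul a b) c)) (L.mul (L.star (L.mul a b)) x)
      = L.mul (L.star (L.mul a (L.mul b c))) x := fun x hx => by
    rw [L.star_mul_mul_star_mul habc
      (L.composable_of_star_eq (L.composable_star_mul_star hab) (hA.2.2 x hx)), hassoc]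
  have onB : ∀ y ∈ B, L.mul (L.star (L.mul (L.mul a b) c)) (L.mul a y)
      = L.mul a (L.mul (L.star (L.mul b c)) y) := fun y hy => by
    rw [L.mul_star_mul habc'
      (L.composable_of_star_eq (L.composable_star_mul_star hbc) (hB.2.2 y hy)), hassoc]
  have onC : ∀ z ∈ C, L.mul (L.mul a b) z = L.mul a (L.mul b z) := fun z hz =>
    (L.assoc₂ a b z hab
      (L.composable_of_star_eq (L.composable_mul_star habc) (hC.2.2 z hz))).2.2
  simp only [szSet, Finset.image_union, Finset.image_image, Finset.union_assoc]
  congr 1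
  · exact Finset.image_congr onA
  congr 1
  · exact Finset.image_congr onB
  · exact Finset.image_congr onC

/-- `Sgpd.mul` is total; off composable pairs the value is irrelevant. -/
noncomputable def szMul (p q : {p : Finset S × S // szCond L p.1 p.2}) :
    {p : Finset S × S // szCond L p.1 p.2} :=
  open Classical in
  if h : L.composable p.1.2 q.1.2 then
    ⟨(szSet L p.1.1 p.1.2 q.1.1 q.1.2, L.mul p.1.2 q.1.2), szCond_szSet L p.2 q.2 h⟩
  else p

theorem szMul_val {p q : {p : Finset S × S // szCond L p.1 p.2}}
    (h : L.composable p.1.2 q.1.2) :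
    (szMul L p q).1 = (szSet L p.1.1 p.1.2 q.1.1 q.1.2, L.mul p.1.2 q.1.2) := by
  rw [szMul, dif_pos h]

theorem szMul_assoc {p q r : {p : Finset S × S // szCond L p.1 p.2}}
    (hpq : L.composable p.1.2 q.1.2) (hqr : L.composable q.1.2 r.1.2) :
    szMul L (szMul L p q) r = szMul L p (szMul L q r) := by
  obtain ⟨hpq_r, hp_qr, hassoc⟩ := L.assoc₁ _ _ _ hpq hqr
  have hpq_r' : L.composable (szMul L p q).1.2 r.1.2 := by rwa [szMul_val L hpq]
  have hp_qr' : L.composable p.1.2 (szMul L q r).1.2 := by rwa [szMul_val L hqr]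
  refine Subtype.ext ?_
  rw [szMul_val L hpq_r', szMul_val L hp_qr', szMul_val L hpq, szMul_val L hqr,
    szSet_assoc L p.2 q.2 r.2 hpq hqr, hassoc]

noncomputable def szSgpd : Sgpd {p : Finset S × S // szCond L p.1 p.2} where
  composable p q := L.composable p.1.2 q.1.2
  mul := szMul L
  assoc₁ p q r hpq hqr := by
    obtain ⟨hpq_r, hp_qr, -⟩ := L.assoc₁ _ _ _ hpq hqr
    refine ⟨?_, ?_, szMul_assoc L hpq hqr⟩
    · rwa [szMul_val L hpq]
    · rwa [szMul_val L hqr]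
  assoc₂ p q r hpq hpq_r := by
    rw [szMul_val L hpq] at hpq_r
    obtain ⟨hqr, hp_qr, -⟩ := L.assoc₂ _ _ _ hpq hpq_r
    refine ⟨hqr, ?_, szMul_assoc L hpq hqr⟩
    rwa [szMul_val L hqr]
  assoc₃ p q r hqr hp_qr := by
    rw [szMul_val L hqr] at hp_qr
    obtain ⟨hpq, hpq_r, -⟩ := L.assoc₃ _ _ _ hqr hp_qr
    refine ⟨hpq, ?_, szMul_assoc L hpq hqr⟩
    rwa [szMul_val L hpq]

end Szendrei

theorem stmt16 {S : Type*} [DecidableEq S] (L : LRSgpd S) :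
    -- the product is well defined
    (∀ A a B b, szCond L A a → szCond L B b → L.composable a b →
      szCond L (szSet L A a B b) (L.mul a b)) ∧
    -- Sz(S) is a semigroupoid
    ∃ G : Sgpd {p : Finset S × S // szCond L p.1 p.2},
      (∀ p q, G.composable p q ↔ L.composable p.1.2 q.1.2) ∧
      (∀ p q, G.composable p q →
        (G.mul p q).1 = (szSet L p.1.1 p.1.2 q.1.1 q.1.2, L.mul p.1.2 q.1.2)) :=
  ⟨fun _ _ _ _ hA hB hab => Szendrei.szCond_szSet L hA hB hab,
    Szendrei.szSgpd L, fun _ _ => Iff.rfl, fun _ _ h => Szendrei.szMul_val L h⟩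
end

section
/- Let S be a left restriction semigroupoid. Then the Szendrei expansion Sz(S), with (A,a)* := (A, a*), is itself a left restriction semigroupoid. -/
/-!
Every element of `A` in a pair `(A, a)` has the same star as `a`, and in a left restriction
semigroupoid composability `s ~ t` and the star `(s t)*` depend on `t` only through `t*`.
Hence each axiom of `Sz(S)` splits into the corresponding axiom of `S` on second components and
a set identity on first components, which is checked element by element from the axioms of `S`.
-/

namespace LRSgpd

variable {S : Type*} (L : LRSgpd S)

local infixl:70 " ⬝ " => L.mul
local postfix:max "°" => L.star
local infix:50 " ~ " => L.composable

section Basic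

variable {s t u x a b : S}

lemma star_composable_self (s : S) : s° ~ s := (L.lr1 s).1

lemma star_mul_self (s : S) : s° ⬝ s = s := (L.lr1 s).2

lemma star_mul_star_self (s : S) : s° ⬝ s° = s° := by
  simpa only [L.star_mul_self] using (L.lr3 s s (L.star_composable_self s)).symm

lemma star_composable_star_self (s : S) : s° ~ s° := by
  have h : s° ~ s°° := (L.lr2 s s°).1.mpr (L.star_composable_self s°)
  have h' : s° ⬝ s°° = s° := by rw [(L.lr2 s s°).2 h, L.star_mul_self]
  simpa only [h'] using (L.assoc₁ _ _ _ h (L.star_composable_self s°)).1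

lemma star_star (s : S) : s°° = s° := by
  have h : s° ~ s°° := (L.lr2 s s°).1.mpr (L.star_composable_self s°)
  have h' := L.lr3 s s° (L.star_composable_star_self s)
  rw [L.star_mul_star_self] at h'
  rw [h', (L.lr2 s s°).2 h, L.star_mul_self]

lemma composable_star_iff_s17 : s ~ t° ↔ s ~ t := by
  refine ⟨fun h => ?_, fun h => ?_⟩
  · simpa only [L.star_mul_self] using (L.assoc₁ s t° t h (L.star_composable_self t)).2.1
  · exact (L.assoc₃ s t° t (L.star_composable_self t) (by rwa [L.star_mul_self])).1

lemma composable_of_star_eq_s17 (hx : x° = t) (h : s ~ t) : s ~ x := by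
  rwa [← L.composable_star_iff_s17, hx]

lemma star_mul_composable_left (h : s ~ t) : (s ⬝ t)° ~ s :=
  (L.assoc₃ _ s t h (L.star_composable_self _)).1

lemma star_composable_mul (h : s ~ t) : s° ~ s ⬝ t :=
  (L.assoc₁ s° s t (L.star_composable_self s) h).2.1

lemma star_mul_mul_self (h : s ~ t) : s° ⬝ (s ⬝ t) = s ⬝ t := by
  simpa only [L.star_mul_self] using (L.assoc₁ s° s t (L.star_composable_self s) h).2.2.symm

lemma star_mul_star_mul_self (h : s ~ t) : s° ⬝ (s ⬝ t)° = (s ⬝ t)° := by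
  simpa only [L.star_mul_mul_self h] using (L.lr3 s _ (L.star_composable_mul h)).symm

lemma star_mul_composable_star_left (h : s ~ t) : (s ⬝ t)° ~ s° :=
  (L.lr2 s _).1.mp (L.composable_star_iff_s17.mpr (L.star_composable_mul h))

lemma star_mul_mul_star_left (h : s ~ t) : (s ⬝ t)° ⬝ s° = (s ⬝ t)° := by
  rw [← (L.lr2 s _).2 (L.composable_star_iff_s17.mpr (L.star_composable_mul h)),
    L.star_mul_star_mul_self h]

lemma star_mul_star_right_s17 (h : s ~ t) : (s ⬝ t°)° = (s ⬝ t)° := by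
  rw [L.lr4 s t h, L.lr3 _ s (L.star_mul_composable_left h), L.star_mul_mul_star_left h]

lemma star_mul_congr_right (h : s ~ t) (hu : u° = t°) : (s ⬝ u)° = (s ⬝ t)° := by
  rw [← L.star_mul_star_right_s17 (L.composable_of_star_eq_s17 hu (L.composable_star_iff_s17.mpr h)), hu,
    L.star_mul_star_right_s17 h]

lemma star_mul_of_star_eq_s17 (h : x° = a°) : a° ⬝ x = x := by
  rw [← h, L.star_mul_self]

lemma star_mul_star_mul_of_composable (h : s° ~ x) : s° ⬝ (s° ⬝ x) = s° ⬝ x := by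
  simpa only [L.star_mul_star_self] using
    (L.assoc₁ s° s° x (L.star_composable_star_self s) h).2.2.symm

lemma star_mul_star_star (h : s° ~ t°) : (s° ⬝ t°)° = t° ⬝ s° := by
  rw [L.lr3 s t° h, L.star_star, (L.lr2 s t).2 h]

lemma star_mul_star_mul_of_star_eq (h : s° ~ t°) (hx : x° = s°) :
    (s° ⬝ t°)° ⬝ x = t° ⬝ x := by
  have hsx : s° ~ x := L.composable_of_star_eq_s17 hx (L.star_composable_star_self s)
  rw [L.star_mul_star_star h, (L.assoc₁ t° s° x ((L.lr2 s t).1.mp h) hsx).2.2,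
    L.star_mul_of_star_eq_s17 hx]

lemma star_mul_composable_of_star_eq (h : a ~ b) (hx : x° = a°) : (a ⬝ b)° ~ x :=
  L.composable_of_star_eq_s17 hx (L.star_mul_composable_star_left h)

lemma star_star_mul_of_star_eq_s17 (h : a ~ b) (hx : x° = a°) :
    ((a ⬝ b)° ⬝ x)° = (a ⬝ b)° := by
  rw [L.lr3 _ x (L.star_mul_composable_of_star_eq h hx), hx, L.star_mul_mul_star_left h]

lemma szCond_star {A : Finset S} (hA : szCond L A a) : szCond L A a° := by
  simpa only [szCond, L.star_star] using ⟨hA.2.1, hA.2.1, hA.2.2⟩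

end Basic

section SzSet

variable [DecidableEq S] {A B C : Finset S} {a b c : S}

lemma star_eq_of_mem_szSet (hA : ∀ x ∈ A, x° = a°) (hB : ∀ y ∈ B, y° = b°) (h : a ~ b) :
    ∀ x ∈ szSet L A a B b, x° = (a ⬝ b)° := by
  simp only [szSet, Finset.mem_union, Finset.mem_image]
  rintro _ (⟨x, hx, rfl⟩ | ⟨y, hy, rfl⟩)
  · exact L.star_star_mul_of_star_eq_s17 h (hA x hx)
  · exact L.star_mul_congr_right h (hB y hy)

lemma szCond_szSet (hA : szCond L A a) (hB : szCond L B b) (h : a ~ b) :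
    szCond L (szSet L A a B b) (a ⬝ b) := by
  refine ⟨?_, ?_, L.star_eq_of_mem_szSet hA.2.2 hB.2.2 h⟩
  · exact Finset.mem_union_right _ (Finset.mem_image_of_mem _ hB.1)
  · exact Finset.mem_union_left _
      (Finset.mem_image.mpr ⟨a°, hA.2.1, L.star_mul_mul_star_left h⟩)

lemma szSet_assoc (hA : ∀ x ∈ A, x° = a°) (hB : ∀ y ∈ B, y° = b°) (hC : ∀ z ∈ C, z° = c°)
    (hab : a ~ b) (hbc : b ~ c) :
    szSet L (szSet L A a B b) (a ⬝ b) C c = szSet L A a (szSet L B b C c) (b ⬝ c) := by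
  obtain ⟨habc, habc', hassoc⟩ := L.assoc₁ a b c hab hbc
  have hA' : ∀ x ∈ A, (a ⬝ b ⬝ c)° ⬝ ((a ⬝ b)° ⬝ x) = (a ⬝ (b ⬝ c))° ⬝ x := by
    intro x hx
    rw [← hassoc, ← (L.assoc₁ _ _ x (L.star_mul_composable_star_left habc)
      (L.star_mul_composable_of_star_eq hab (hA x hx))).2.2, L.star_mul_mul_star_left habc]
  have hB' : ∀ y ∈ B, (a ⬝ b ⬝ c)° ⬝ (a ⬝ y) = a ⬝ ((b ⬝ c)° ⬝ y) := by
    intro y hy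
    have hay : a ~ y := L.composable_of_star_eq_s17 (hB y hy) (L.composable_star_iff_s17.mpr hab)
    have hEa : (a ⬝ b ⬝ c)° ~ a := hassoc ▸ L.star_mul_composable_left habc'
    have hmove : (a ⬝ b ⬝ c)° ⬝ a = a ⬝ (b ⬝ c)° := hassoc ▸ (L.lr4 a _ habc').symm
    rw [← (L.assoc₁ _ a y hEa hay).2.2, hmove,
      (L.assoc₁ a _ y (L.composable_star_iff_s17.mpr habc')
        (L.star_mul_composable_of_star_eq hbc (hB y hy))).2.2]
  have hC' : ∀ z ∈ C, a ⬝ b ⬝ z = a ⬝ (b ⬝ z) := fun z hz =>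
    (L.assoc₁ a b z hab (L.composable_of_star_eq_s17 (hC z hz) (L.composable_star_iff_s17.mpr hbc))).2.2
  simp only [szSet, Finset.image_union, Finset.image_image, Finset.union_assoc]
  congr 1
  · exact Finset.image_congr fun x hx => hA' x hx
  congr 1
  · exact Finset.image_congr fun y hy => hB' y hy
  · exact Finset.image_congr fun z hz => hC' z hz

lemma szSet_star_comm (hA : ∀ x ∈ A, x° = a°) (hB : ∀ y ∈ B, y° = b°) (h : a° ~ b°) :
    szSet L A a° B b° = szSet L B b° A a° := by
  have h' : b° ~ a° := (L.lr2 a b).1.mp h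
  rw [szSet, szSet, Finset.union_comm]
  congr 1
  · exact Finset.image_congr fun y hy => (L.star_mul_star_mul_of_star_eq h' (hB y hy)).symm
  · exact Finset.image_congr fun x hx => L.star_mul_star_mul_of_star_eq h (hA x hx)

lemma szSet_star_right (h : a° ~ b) : szSet L A a° B b = szSet L A a° B b° := by
  rw [szSet, szSet, L.star_mul_star_right_s17 h]

lemma szSet_star_self (hA : ∀ x ∈ A, x° = a°) : szSet L A a° A a = A := by
  rw [szSet, L.star_mul_self, Finset.union_self,
    Finset.image_congr fun x hx => L.star_mul_of_star_eq_s17 (hA x hx), Finset.image_id']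

lemma szSet_star_szSet (hA : ∀ x ∈ A, x° = a°) (hB : ∀ y ∈ B, y° = b°) (h : a ~ b) :
    szSet L (szSet L A a B b) (a ⬝ b)° A a = szSet L A a B b° := by
  have hA' : ∀ x ∈ A, (a ⬝ b)° ⬝ ((a ⬝ b)° ⬝ x) = (a ⬝ b)° ⬝ x := fun x hx =>
    L.star_mul_star_mul_of_composable (L.star_mul_composable_of_star_eq h (hA x hx))
  have hB' : ∀ y ∈ B, (a ⬝ b)° ⬝ (a ⬝ y) = a ⬝ y := fun y hy => by
    rw [← L.star_mul_congr_right h (hB y hy), L.star_mul_self]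
  simp only [szSet, L.lr3 _ a (L.star_mul_composable_left h), L.star_mul_mul_star_left h,
    L.star_mul_star_right_s17 h, Finset.image_union, Finset.image_image, Function.comp_def]
  rw [Finset.image_congr fun x hx => hA' x hx, Finset.image_congr fun y hy => hB' y hy,
    Finset.union_right_comm, Finset.union_self]

end SzSet

abbrev Szendrei := {p : Finset S × S // szCond L p.1 p.2}

variable {L} [DecidableEq S] {p q r : L.Szendrei}

def szStar (p : L.Szendrei) : L.Szendrei := ⟨(p.1.1, p.1.2°), L.szCond_star p.2⟩

open Classical in
noncomputable def szMul (p q : L.Szendrei) : L.Szendrei :=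
  if h : p.1.2 ~ q.1.2 then
    ⟨(szSet L p.1.1 p.1.2 q.1.1 q.1.2, p.1.2 ⬝ q.1.2), L.szCond_szSet p.2 q.2 h⟩
  else p

lemma szMul_val (h : p.1.2 ~ q.1.2) :
    (szMul p q).1 = (szSet L p.1.1 p.1.2 q.1.1 q.1.2, p.1.2 ⬝ q.1.2) := by
  rw [szMul, dif_pos h]

lemma szMul_snd (h : p.1.2 ~ q.1.2) : (szMul p q).1.2 = p.1.2 ⬝ q.1.2 := by
  rw [szMul_val h]

lemma szMul_assoc (hpq : p.1.2 ~ q.1.2) (hqr : q.1.2 ~ r.1.2) :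
    szMul (szMul p q) r = szMul p (szMul q r) := by
  obtain ⟨hpq_r, hp_qr, hassoc⟩ := L.assoc₁ _ _ _ hpq hqr
  have hpq_r' : (szMul p q).1.2 ~ r.1.2 := by rwa [szMul_snd hpq]
  have hp_qr' : p.1.2 ~ (szMul q r).1.2 := by rwa [szMul_snd hqr]
  apply Subtype.ext
  rw [szMul_val hpq_r', szMul_val hp_qr', szMul_val hpq, szMul_val hqr]
  exact Prod.ext (L.szSet_assoc p.2.2.2 q.2.2.2 r.2.2.2 hpq hqr) hassoc

variable (L) in
noncomputable def szendreiExpansion : LRSgpd L.Szendrei where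
  composable p q := p.1.2 ~ q.1.2
  mul := szMul
  star := szStar
  assoc₁ p q r hpq hqr := by
    obtain ⟨hpq_r, hp_qr, -⟩ := L.assoc₁ _ _ _ hpq hqr
    exact ⟨by rwa [szMul_snd hpq], by rwa [szMul_snd hqr], szMul_assoc hpq hqr⟩
  assoc₂ p q r hpq hpq_r := by
    obtain ⟨hqr, hp_qr, -⟩ := L.assoc₂ _ _ _ hpq (by rwa [szMul_snd hpq] at hpq_r)
    exact ⟨hqr, by rwa [szMul_snd hqr], szMul_assoc hpq hqr⟩
  assoc₃ p q r hqr hp_qr := by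
    obtain ⟨hpq, hpq_r, -⟩ := L.assoc₃ _ _ _ hqr (by rwa [szMul_snd hqr] at hp_qr)
    exact ⟨hpq, by rwa [szMul_snd hpq], szMul_assoc hpq hqr⟩
  lr1 p := by
    refine ⟨L.star_composable_self _, Subtype.ext ?_⟩
    rw [szMul_val (L.star_composable_self _)]
    exact Prod.ext (L.szSet_star_self p.2.2.2) (L.star_mul_self _)
  lr2 p q := by
    refine ⟨(L.lr2 _ _).1, fun h => Subtype.ext ?_⟩
    rw [szMul_val h, szMul_val ((L.lr2 _ _).1.mp h)]
    exact Prod.ext (L.szSet_star_comm p.2.2.2 q.2.2.2 h) ((L.lr2 _ _).2 h)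
  lr3 p q h := by
    apply Subtype.ext
    change ((szMul (szStar p) q).1.1, (szMul (szStar p) q).1.2°) = _
    rw [szMul_val h, szMul_val (L.composable_star_iff_s17.mpr h)]
    exact Prod.ext (L.szSet_star_right h) (L.lr3 _ _ h)
  lr4 p q h := by
    have hpq_p : (szStar (szMul p q)).1.2 ~ p.1.2 := by
      change (szMul p q).1.2° ~ p.1.2
      rw [szMul_snd h]
      exact L.star_mul_composable_left h
    apply Subtype.ext
    rw [szMul_val (L.composable_star_iff_s17.mpr h), szMul_val hpq_p]
    simp only [szStar, szMul_val h]
    exact Prod.ext (L.szSet_star_szSet p.2.2.2 q.2.2.2 h).symm (L.lr4 _ _ h)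

end LRSgpd

theorem stmt17 {S : Type*} [DecidableEq S] (L : LRSgpd S) :
    ∃ LZ : LRSgpd {p : Finset S × S // szCond L p.1 p.2},
      (∀ p q, LZ.composable p q ↔ L.composable p.1.2 q.1.2) ∧
      (∀ p q, LZ.composable p q →
        (LZ.mul p q).1 = (szSet L p.1.1 p.1.2 q.1.1 q.1.2, L.mul p.1.2 q.1.2)) ∧
      (∀ p, (LZ.star p).1 = (p.1.1, L.star p.1.2)) :=
  ⟨L.szendreiExpansion, fun _ _ => Iff.rfl, fun _ _ => LRSgpd.szMul_val, fun _ => rfl⟩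
end

section
/- Let S be a left restriction semigroupoid and Sz(S) its Szendrei expansion with natural partial order ⪯. For (A,a), (B,b) ∈ Sz(S): (A,a) ⪯ (B,b) if and only if a ⪯ b in S and a*B ⊆ A. -/
/-- The natural partial order: `s ⪯ t` iff `(s*, t)` is composable and `s* t = s`. -/
def natle {S : Type*} (L : LRSgpd S) (s t : S) : Prop :=
  L.composable (L.star s) t ∧ L.mul (L.star s) t = s

namespace LRSgpd

variable {S : Type*} (L : LRSgpd S)

theorem mul_star_eq_self_of_star_eq {a x : S} (h : L.star x = L.star a) :
    L.mul (L.star a) x = x :=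
  h ▸ (L.lr1 x).2

theorem image_mul_star_eq_self [DecidableEq S] {A : Finset S} {a : S}
    (hA : ∀ x ∈ A, L.star x = L.star a) :
    A.image (fun x => L.mul (L.star a) x) = A := by
  conv_rhs => rw [← A.image_id]
  exact Finset.image_congr fun x hx => L.mul_star_eq_self_of_star_eq (hA x hx)

theorem szSet_star_eq_union [DecidableEq S] {A B : Finset S} {a b : S}
    (hA : ∀ x ∈ A, L.star x = L.star a) (hab : L.mul (L.star a) b = a) :
    szSet L A (L.star a) B b = A ∪ B.image (fun x => L.mul (L.star a) x) := by
  rw [szSet, hab, L.image_mul_star_eq_self hA]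

end LRSgpd

theorem stmt18_general {S : Type*} [DecidableEq S] (L : LRSgpd S)
    (A : Finset S) (a : S) (B : Finset S) (b : S)
    (hA : szCond L A a) :
    -- (A,a) ⪯ (B,b), i.e. (A,a)* (B,b) is defined and equals (A,a)
    (L.composable (L.star a) b ∧ szSet L A (L.star a) B b = A ∧
      L.mul (L.star a) b = a)
    ↔
    (natle L a b ∧ B.image (fun x => L.mul (L.star a) x) ⊆ A) := by
  constructor
  · rintro ⟨hc, hset, hmul⟩
    refine ⟨⟨hc, hmul⟩, ?_⟩
    rw [← hset]
    exact Finset.subset_union_right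
  · rintro ⟨⟨hc, hmul⟩, hsub⟩
    refine ⟨hc, ?_, hmul⟩
    rw [L.szSet_star_eq_union hA.2.2 hmul, Finset.union_eq_left.mpr hsub]

theorem stmt18 {S : Type*} [DecidableEq S] (L : LRSgpd S)
    (A : Finset S) (a : S) (B : Finset S) (b : S)
    (hA : szCond L A a) (hB : szCond L B b) :
    -- (A,a) ⪯ (B,b), i.e. (A,a)* (B,b) is defined and equals (A,a)
    (L.composable (L.star a) b ∧ szSet L A (L.star a) B b = A ∧
      L.mul (L.star a) b = a)
    ↔
    (natle L a b ∧ B.image (fun x => L.mul (L.star a) x) ⊆ A) :=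
  stmt18_general L A a B b hA
end
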